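/- (Product rule for bipartite affine semidefinite programs; dual form of Theorem 1, item 2.) Let the row/column index set be partitioned into two blocks S ∪ T. For i ∈ {1,2}, let J_i be a symmetric real matrix that is block anti-diagonal with respect to the partition, let A_{i,1},…,A_{i,m_i} be real matrices that are block diagonal with respect to the partition, and let b_i ∈ ℝ^{m_i}. Suppose y_i ∈ ℝ^{m_i} satisfies Σ_j y_i[j]·A_{i,j} − J_i ⪰ 0 for i ∈ {1,2}. Then Σ_{j,j'} y_1[j]·y_2[j']·(A_{1,j} ⊗ A_{2,j'}) − J_1 ⊗ J_2 is positive semidefinite; consequently, for every positive semidefinite X with (A_{1,j} ⊗ A_{2,j'}) • X = b_1[j]·b_2[j'] for all j,j', one has (J_1 ⊗ J_2) • X ≤ (y_1ᵀb_1)·(y_2ᵀb_2). -/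

import Mathlib

open Matrix Kronecker BigOperators

/-- Frobenius inner product of two real matrices. -/
def frob {α β : Type*} [Fintype α] [Fintype β] (A X : Matrix α β ℝ) : ℝ :=
  ∑ i, ∑ j, A i j * X i j

/-!
Write `Pᵢ = ∑ⱼ yᵢ[j] Aᵢⱼ`. Conjugating by the diagonal `±1` matrix of the partition fixes the
block diagonal `Pᵢ` and negates the block anti-diagonal `Jᵢ`, so `Pᵢ - Jᵢ ⪰ 0` gives `Pᵢ + Jᵢ ⪰ 0`.
Then `P₁ ⊗ P₂ - J₁ ⊗ J₂ = ½ ((P₁ - J₁) ⊗ (P₂ + J₂) + (P₁ + J₁) ⊗ (P₂ - J₂))` is a sum of Kronecker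
products of positive semidefinite matrices. Its Frobenius product with a positive semidefinite `X`
is nonnegative, and by the constraints on `X` it equals `(y₁ᵀb₁)(y₂ᵀb₂) - (J₁ ⊗ J₂) • X`.
-/

namespace Matrix

variable {n R : Type*} [CommRing R]

def signDiagonal [DecidableEq n] (p : n → Bool) : Matrix n n R :=
  diagonal fun i => if p i then 1 else -1

theorem signDiagonal_mul_mul_signDiagonal_apply [Fintype n] [DecidableEq n] (p : n → Bool)
    (M : Matrix n n R) (i j : n) :
    (signDiagonal p * M * signDiagonal p : Matrix n n R) i j =
      if p i = p j then M i j else -M i j := by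
  simp only [signDiagonal, mul_diagonal, diagonal_mul]
  cases p i <;> cases p j <;> simp

theorem signDiagonal_mul_sub_mul_signDiagonal [Fintype n] [DecidableEq n] {p : n → Bool}
    {P J : Matrix n n R} (hP : ∀ i j, p i ≠ p j → P i j = 0)
    (hJ : ∀ i j, p i = p j → J i j = 0) :
    signDiagonal p * (P - J) * signDiagonal p = P + J := by
  ext i j
  rw [signDiagonal_mul_mul_signDiagonal_apply]
  by_cases h : p i = p j
  · simp [h, hJ i j h]
  · simp [h, hP i j h]

theorem conjTranspose_signDiagonal [StarRing R] [DecidableEq n] (p : n → Bool) :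
    (signDiagonal p : Matrix n n R)ᴴ = signDiagonal p := by
  rw [signDiagonal, diagonal_conjTranspose]
  congr 1
  funext i
  cases h : p i <;> simp [h]

theorem PosSemidef.add_of_sub [Fintype n] [DecidableEq n] [PartialOrder R] [StarRing R]
    {p : n → Bool} {P J : Matrix n n R} (hP : ∀ i j, p i ≠ p j → P i j = 0)
    (hJ : ∀ i j, p i = p j → J i j = 0) (h : (P - J).PosSemidef) : (P + J).PosSemidef := by
  simpa [conjTranspose_signDiagonal, signDiagonal_mul_sub_mul_signDiagonal hP hJ] using
    h.mul_mul_conjTranspose_same (signDiagonal p)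

theorem sum_smul_apply_eq_zero {m ι : Type*} [Fintype ι] {A : ι → Matrix m n R} (c : ι → R)
    {i : m} {j : n} (hA : ∀ l, A l i j = 0) : (∑ l, c l • A l) i j = 0 := by
  simp [sum_apply, hA]

theorem sum_smul_kronecker_sum_smul {l m p ι κ : Type*} [Fintype ι] [Fintype κ]
    (c : ι → R) (A : ι → Matrix l m R) (d : κ → R) (B : κ → Matrix n p R) :
    (∑ i, c i • A i) ⊗ₖ (∑ k, d k • B k) = ∑ i, ∑ k, (c i * d k) • (A i ⊗ₖ B k) := by
  ext ⟨i, k⟩ ⟨j, l⟩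
  simp only [kroneckerMap_apply, sum_apply, smul_apply, smul_eq_mul, Finset.sum_mul_sum]
  exact Finset.sum_congr rfl fun _ _ => Finset.sum_congr rfl fun _ _ => mul_mul_mul_comm ..

section RCLike

open scoped ComplexOrder

variable {m 𝕜 : Type*} [RCLike 𝕜]

theorem kronecker_sub_kronecker_eq (P J : Matrix n n 𝕜) (Q K : Matrix m m 𝕜) :
    P ⊗ₖ Q - J ⊗ₖ K = (2⁻¹ : 𝕜) • ((P - J) ⊗ₖ (Q + K) + (P + J) ⊗ₖ (Q - K)) := by
  ext ⟨i, k⟩ ⟨j, l⟩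
  simp only [sub_apply, smul_apply, add_apply, kroneckerMap_apply, smul_eq_mul]
  ring

theorem PosSemidef.kronecker_sub_kronecker [Finite n] [Finite m] {P J : Matrix n n 𝕜}
    {Q K : Matrix m m 𝕜} (hPJ : (P - J).PosSemidef) (hPJ' : (P + J).PosSemidef)
    (hQK : (Q - K).PosSemidef) (hQK' : (Q + K).PosSemidef) :
    (P ⊗ₖ Q - J ⊗ₖ K).PosSemidef := by
  rw [kronecker_sub_kronecker_eq]
  exact ((hPJ.kronecker hQK').add (hPJ'.kronecker hQK)).smul (inv_nonneg.2 zero_le_two)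

end RCLike

end Matrix

section frob

variable {α β : Type*} [Fintype α] [Fintype β]

theorem frob_sub (A B X : Matrix α β ℝ) : frob (A - B) X = frob A X - frob B X := by
  simp only [frob, Matrix.sub_apply, sub_mul, Finset.sum_sub_distrib]

theorem frob_smul (c : ℝ) (A X : Matrix α β ℝ) : frob (c • A) X = c * frob A X := by
  simp only [frob, Matrix.smul_apply, smul_eq_mul, Finset.mul_sum, mul_assoc]

theorem frob_sum {ι : Type*} (s : Finset ι) (A : ι → Matrix α β ℝ) (X : Matrix α β ℝ) :
    frob (∑ k ∈ s, A k) X = ∑ k ∈ s, frob (A k) X := by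
  simp only [frob, Matrix.sum_apply, Finset.sum_mul]
  conv_rhs => rw [Finset.sum_comm]
  exact Finset.sum_congr rfl fun _ _ => Finset.sum_comm

theorem frob_eq_trace_mul_transpose (A X : Matrix α α ℝ) : frob A X = (A * Xᵀ).trace := by
  simp [frob, trace, mul_apply]

theorem frob_nonneg {M X : Matrix α α ℝ} (hM : M.PosSemidef) (hX : X.PosSemidef) :
    0 ≤ frob M X := by
  classical
  open scoped MatrixOrder in
  obtain ⟨B, rfl⟩ := CStarAlgebra.nonneg_iff_eq_star_mul_self.mp hX.nonneg
  -- `tr (M * (Bᴴ * B)) = tr (B * M * Bᴴ)`, the trace of a positive semidefinite matrix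
  rw [frob_eq_trace_mul_transpose, ← conjTranspose_eq_transpose_of_trivial, hX.isHermitian.eq,
    star_eq_conjTranspose, ← mul_assoc, trace_mul_comm, ← mul_assoc]
  exact (hM.mul_mul_conjTranspose_same B).trace_nonneg

end frob

theorem stmt_8_general {n : Type*} [Fintype n] [DecidableEq n]
    (p : n → Bool)
    {m1 m2 : ℕ}
    (J1 J2 : Matrix n n ℝ)
    (hJ1anti : ∀ i j, p i = p j → J1 i j = 0)
    (hJ2anti : ∀ i j, p i = p j → J2 i j = 0)
    (A1 : Fin m1 → Matrix n n ℝ) (A2 : Fin m2 → Matrix n n ℝ)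
    (hA1diag : ∀ l i j, p i ≠ p j → A1 l i j = 0)
    (hA2diag : ∀ l i j, p i ≠ p j → A2 l i j = 0)
    (b1 : Fin m1 → ℝ) (b2 : Fin m2 → ℝ)
    (y1 : Fin m1 → ℝ) (y2 : Fin m2 → ℝ)
    (h1 : ((∑ j, y1 j • A1 j) - J1).PosSemidef)
    (h2 : ((∑ j, y2 j • A2 j) - J2).PosSemidef) :
    ((∑ j, ∑ j', (y1 j * y2 j') • (A1 j ⊗ₖ A2 j')) - J1 ⊗ₖ J2).PosSemidef ∧
    ∀ X : Matrix (n × n) (n × n) ℝ, X.PosSemidef →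
      (∀ j j', frob (A1 j ⊗ₖ A2 j') X = b1 j * b2 j') →
      frob (J1 ⊗ₖ J2) X ≤ (∑ j, y1 j * b1 j) * (∑ j, y2 j * b2 j) := by
  have h1' := h1.add_of_sub (fun i j hij => sum_smul_apply_eq_zero y1 (hA1diag · i j hij)) hJ1anti
  have h2' := h2.add_of_sub (fun i j hij => sum_smul_apply_eq_zero y2 (hA2diag · i j hij)) hJ2anti
  have hpsd : ((∑ j, ∑ j', (y1 j * y2 j') • (A1 j ⊗ₖ A2 j')) - J1 ⊗ₖ J2).PosSemidef := by
    rw [← sum_smul_kronecker_sum_smul]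
    exact h1.kronecker_sub_kronecker h1' h2 h2'
  refine ⟨hpsd, fun X hX hb => ?_⟩
  have hdual : frob (∑ j, ∑ j', (y1 j * y2 j') • (A1 j ⊗ₖ A2 j')) X
      = (∑ j, y1 j * b1 j) * (∑ j, y2 j * b2 j) := by
    simp only [frob_sum, frob_smul, hb, Finset.sum_mul_sum]
    exact Finset.sum_congr rfl fun _ _ => Finset.sum_congr rfl fun _ _ => mul_mul_mul_comm ..
  have hnonneg := frob_nonneg hpsd hX
  rw [frob_sub, hdual] at hnonneg
  linarith

theorem stmt_8 {n : Type*} [Fintype n] [DecidableEq n]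
    (p : n → Bool)
    {m1 m2 : ℕ}
    (J1 J2 : Matrix n n ℝ)
    (hJ1sym : J1.IsSymm) (hJ2sym : J2.IsSymm)
    (hJ1anti : ∀ i j, p i = p j → J1 i j = 0)
    (hJ2anti : ∀ i j, p i = p j → J2 i j = 0)
    (A1 : Fin m1 → Matrix n n ℝ) (A2 : Fin m2 → Matrix n n ℝ)
    (hA1diag : ∀ l i j, p i ≠ p j → A1 l i j = 0)
    (hA2diag : ∀ l i j, p i ≠ p j → A2 l i j = 0)
    (b1 : Fin m1 → ℝ) (b2 : Fin m2 → ℝ)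
    (y1 : Fin m1 → ℝ) (y2 : Fin m2 → ℝ)
    (h1 : ((∑ j, y1 j • A1 j) - J1).PosSemidef)
    (h2 : ((∑ j, y2 j • A2 j) - J2).PosSemidef) :
    ((∑ j, ∑ j', (y1 j * y2 j') • (A1 j ⊗ₖ A2 j')) - J1 ⊗ₖ J2).PosSemidef ∧
    ∀ X : Matrix (n × n) (n × n) ℝ, X.PosSemidef →
      (∀ j j', frob (A1 j ⊗ₖ A2 j') X = b1 j * b2 j') →
      frob (J1 ⊗ₖ J2) X ≤ (∑ j, y1 j * b1 j) * (∑ j, y2 j * b2 j) :=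
  stmt_8_general p J1 J2 hJ1anti hJ2anti A1 A2 hA1diag hA2diag b1 b2 y1 y2 h1 h2
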